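/- Let E be a finite-dimensional real inner product space, X ⊆ E, and x ∈ X. Then x is apocalyptic — i.e., there exist a sequence (x_k) in X converging to x and a continuously differentiable f : E → ℝ with s(−∇f(x_k), T_{x_k}X) → 0 and s(−∇f(x), T_xX) > 0 — if and only if there exists a sequence (x_k) in X converging to x such that (limsup_k T_{x_k}X)° is not contained in (T_xX)°. -/

import Mathlib

open Filter Topology

/-- The Bouligand tangent cone of `X ⊆ E` at `x`. -/
def bTangentCone {E : Type*} [NormedAddCommGroup E] [NormedSpace ℝ E]
    (X : Set E) (x : E) : Set E :=
  {v | ∃ (xk : ℕ → E) (τ : ℕ → ℝ), (∀ k, xk k ∈ X) ∧ (∀ k, 0 < τ k) ∧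
    Tendsto τ atTop (𝓝 0) ∧ Tendsto (fun k => (τ k)⁻¹ • (xk k - x)) atTop (𝓝 v)}

/-- The polar of a set `K ⊆ E`: `K° = {w : ⟪w, z⟫ ≤ 0 for all z ∈ K}`. -/
def polarCone {E : Type*} [NormedAddCommGroup E] [InnerProductSpace ℝ E] (K : Set E) : Set E :=
  {w | ∀ z ∈ K, (inner ℝ w z : ℝ) ≤ 0}

/-- The stationarity measure `s(v, K) = max(0, sup{⟪v, z⟫ : z ∈ K, ‖z‖ = 1})`; note that on `ℝ`,
Lean's `sSup` of the empty set is `0`, matching the convention `sup ∅ = 0`. -/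
noncomputable def statMeasure {E : Type*} [NormedAddCommGroup E] [InnerProductSpace ℝ E]
    (v : E) (K : Set E) : ℝ :=
  max 0 (sSup {t : ℝ | ∃ z ∈ K, ‖z‖ = 1 ∧ (inner ℝ v z : ℝ) = t})

/-- The outer limit `limsup_k S_k`: points `u` for which there are a strictly increasing sequence
of indices `(k_i)` and points `u_i ∈ S_{k_i}` with `u_i → u`. -/
def outerLimit {E : Type*} [NormedAddCommGroup E] (S : ℕ → Set E) : Set E :=
  {u | ∃ φ : ℕ → ℕ, StrictMono φ ∧
    ∃ uk : ℕ → E, (∀ i, uk i ∈ S (φ i)) ∧ Tendsto uk atTop (𝓝 u)}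

/-!
If `-∇f(x_k)` is asymptotically stationary on the cones `T_{x_k}X`, continuity of `∇f` puts its
limit `-∇f(x)` in the polar of the outer limit of these cones, while `s(-∇f(x), T_xX) > 0` says
exactly that it is not in the polar of `T_xX`. Conversely, for `w` in the first polar but not in
the second, the linear function `f = ⟪-w, ·⟫` has `-∇f ≡ w`; compactness of the unit sphere
turns `w ∈ (limsup_k T_{x_k}X)°` into `s(w, T_{x_k}X) → 0`.
-/

section statMeasure

variable {E : Type*} [NormedAddCommGroup E] [InnerProductSpace ℝ E]

lemma bddAbove_statMeasure_set (v : E) (K : Set E) :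
    BddAbove {t : ℝ | ∃ z ∈ K, ‖z‖ = 1 ∧ inner ℝ v z = t} := by
  refine ⟨‖v‖, ?_⟩
  rintro t ⟨z, -, hz1, rfl⟩
  simpa [hz1] using real_inner_le_norm v z

lemma statMeasure_nonneg (v : E) (K : Set E) : 0 ≤ statMeasure v K := le_max_left _ _

lemma inner_le_statMeasure {v z : E} {K : Set E} (hz : z ∈ K) (hz1 : ‖z‖ = 1) :
    inner ℝ v z ≤ statMeasure v K :=
  (le_csSup (bddAbove_statMeasure_set v K) ⟨z, hz, hz1, rfl⟩).trans (le_max_right _ _)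

lemma exists_lt_inner_of_lt_statMeasure {v : E} {K : Set E} {b : ℝ} (hb : 0 ≤ b)
    (h : b < statMeasure v K) : ∃ z ∈ K, ‖z‖ = 1 ∧ b < inner ℝ v z := by
  have hsup : b < sSup {t : ℝ | ∃ z ∈ K, ‖z‖ = 1 ∧ inner ℝ v z = t} :=
    (lt_max_iff.1 h).resolve_left hb.not_gt
  have hne : {t : ℝ | ∃ z ∈ K, ‖z‖ = 1 ∧ inner ℝ v z = t}.Nonempty := by
    by_contra hempty
    rw [Set.not_nonempty_iff_eq_empty.1 hempty, Real.sSup_empty] at hsup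
    exact hb.not_gt hsup
  obtain ⟨_, ⟨z, hz, hz1, rfl⟩, hbz⟩ := exists_lt_of_lt_csSup hne hsup
  exact ⟨z, hz, hz1, hbz⟩

variable {K : Set E} (hK : ∀ c : ℝ, 0 < c → ∀ u ∈ K, c • u ∈ K)
include hK

lemma inner_le_statMeasure_mul_norm_of_cone (v : E) {u : E} (hu : u ∈ K) :
    inner ℝ v u ≤ statMeasure v K * ‖u‖ := by
  rcases eq_or_ne u 0 with rfl | hu0
  · simp
  have hnu : 0 < ‖u‖ := norm_pos_iff.2 hu0
  have hunit : inner ℝ v (‖u‖⁻¹ • u) ≤ statMeasure v K :=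
    inner_le_statMeasure (hK _ (inv_pos.2 hnu) u hu) (norm_smul_inv_norm hu0)
  rw [real_inner_smul_right, inv_mul_le_iff₀ hnu] at hunit
  linarith

lemma statMeasure_pos_iff_notMem_polarCone_of_cone (v : E) :
    0 < statMeasure v K ↔ v ∉ polarCone K := by
  constructor
  · intro hpos hpolar
    obtain ⟨z, hz, -, hvz⟩ := exists_lt_inner_of_lt_statMeasure le_rfl hpos
    exact (hpolar z hz).not_gt hvz
  · intro hv
    obtain ⟨z, hz, hvz⟩ : ∃ z ∈ K, 0 < inner ℝ v z := by
      simpa [polarCone] using hv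
    have hz0 : z ≠ 0 := by rintro rfl; simp at hvz
    have hnz : 0 < ‖z‖ := norm_pos_iff.2 hz0
    exact lt_of_lt_of_le (by rw [real_inner_smul_right]; positivity)
      (inner_le_statMeasure (hK _ (inv_pos.2 hnz) z hz) (norm_smul_inv_norm hz0))

end statMeasure

section outerLimit

variable {E : Type*} [NormedAddCommGroup E] [InnerProductSpace ℝ E]

lemma mem_polarCone_outerLimit_of_tendsto_statMeasure {S : ℕ → Set E}
    (hS : ∀ k, ∀ c : ℝ, 0 < c → ∀ u ∈ S k, c • u ∈ S k) {v : ℕ → E} {w : E}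
    (hv : Tendsto v atTop (𝓝 w)) (hs : Tendsto (fun k => statMeasure (v k) (S k)) atTop (𝓝 0)) :
    w ∈ polarCone (outerLimit S) := by
  rintro u ⟨φ, hφ, uk, huk, hu⟩
  have hlhs : Tendsto (fun i => inner ℝ (v (φ i)) (uk i)) atTop (𝓝 (inner ℝ w u)) :=
    (hv.comp hφ.tendsto_atTop).inner hu
  have hrhs : Tendsto (fun i => statMeasure (v (φ i)) (S (φ i)) * ‖uk i‖) atTop (𝓝 (0 * ‖u‖)) :=
    (hs.comp hφ.tendsto_atTop).mul hu.norm
  simpa using le_of_tendsto_of_tendsto' hlhs hrhs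
    fun i => inner_le_statMeasure_mul_norm_of_cone (hS (φ i)) _ (huk i)

lemma tendsto_statMeasure_of_mem_polarCone_outerLimit [FiniteDimensional ℝ E] {S : ℕ → Set E}
    {w : E} (hw : w ∈ polarCone (outerLimit S)) :
    Tendsto (fun k => statMeasure w (S k)) atTop (𝓝 0) := by
  refine tendsto_order.2 ⟨fun a ha => Eventually.of_forall fun k =>
    ha.trans_le (statMeasure_nonneg _ _), fun ε hε => ?_⟩
  by_contra hnot
  obtain ⟨φ, hφ, hφε⟩ := extraction_of_frequently_atTop (not_eventually.1 hnot)
  choose z hzS hz1 hwz using fun i => exists_lt_inner_of_lt_statMeasure (by linarith)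
    ((half_lt_self hε).trans_le (not_lt.1 (hφε i)))
  obtain ⟨u, -, ψ, hψ, hzu⟩ := (isCompact_sphere (0 : E) 1).tendsto_subseq
    (x := z) fun i => mem_sphere_zero_iff_norm.2 (hz1 i)
  have hwu : inner ℝ w u ≤ 0 := hw u ⟨φ ∘ ψ, hφ.comp hψ, z ∘ ψ, fun i => hzS (ψ i), hzu⟩
  have hwu' : ε / 2 ≤ inner ℝ w u :=
    ge_of_tendsto (tendsto_const_nhds.inner hzu) (Eventually.of_forall fun i => (hwz (ψ i)).le)
  linarith

end outerLimit

lemma smul_mem_bTangentCone {E : Type*} [NormedAddCommGroup E] [NormedSpace ℝ E] {X : Set E} {y : E} (c : ℝ) (hc : 0 < c) (v : E)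
    (hv : v ∈ bTangentCone X y) : c • v ∈ bTangentCone X y := by
  obtain ⟨xk, τ, hX, hτ, hτ0, hlim⟩ := hv
  refine ⟨xk, fun k => c⁻¹ * τ k, hX, fun k => mul_pos (inv_pos.2 hc) (hτ k), ?_, ?_⟩
  · simpa using hτ0.const_mul c⁻¹
  · refine (hlim.const_smul c).congr fun k => ?_
    rw [mul_inv, inv_inv, smul_smul]

section gradient

variable {E : Type*} [NormedAddCommGroup E] [InnerProductSpace ℝ E] [CompleteSpace E]

lemma gradient_inner_left (a y : E) : gradient (fun y => inner ℝ a y) y = a :=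
  (hasGradientAt_iff_hasFDerivAt.2 (InnerProductSpace.toDual ℝ E a).hasFDerivAt).gradient

lemma ContDiff.continuous_gradient {f : E → ℝ} (hf : ContDiff ℝ 1 f) : Continuous (gradient f) :=
  (InnerProductSpace.toDual ℝ E).symm.continuous.comp (hf.continuous_fderiv one_ne_zero)

end gradient

theorem stmt9_general {E : Type*} [NormedAddCommGroup E] [InnerProductSpace ℝ E] [FiniteDimensional ℝ E]
    (X : Set E) (x : E) :
    (∃ (xk : ℕ → E) (f : E → ℝ), (∀ k, xk k ∈ X) ∧ Tendsto xk atTop (𝓝 x) ∧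
      ContDiff ℝ 1 f ∧
      Tendsto (fun k => statMeasure (-gradient f (xk k)) (bTangentCone X (xk k))) atTop (𝓝 0) ∧
      0 < statMeasure (-gradient f x) (bTangentCone X x)) ↔
    (∃ xk : ℕ → E, (∀ k, xk k ∈ X) ∧ Tendsto xk atTop (𝓝 x) ∧
      ¬ polarCone (outerLimit fun k => bTangentCone X (xk k)) ⊆
          polarCone (bTangentCone X x)) := by
  have hcone : ∀ y, ∀ c : ℝ, 0 < c → ∀ u ∈ bTangentCone X y, c • u ∈ bTangentCone X y :=
    fun y => smul_mem_bTangentCone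
  constructor
  · rintro ⟨xk, f, hX, hxk, hf, hs, hpos⟩
    have hlim : Tendsto (fun k => -gradient f (xk k)) atTop (𝓝 (-gradient f x)) :=
      ((hf.continuous_gradient.tendsto x).comp hxk).neg
    exact ⟨xk, hX, hxk, fun hsub => (statMeasure_pos_iff_notMem_polarCone_of_cone (hcone x) _).1
      hpos (hsub (mem_polarCone_outerLimit_of_tendsto_statMeasure (fun k => hcone _) hlim hs))⟩
  · rintro ⟨xk, hX, hxk, hsub⟩
    obtain ⟨w, hwlim, hwx⟩ := Set.not_subset.1 hsub
    have hgrad : ∀ y, -gradient (fun y => inner ℝ (-w) y) y = w := fun y => by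
      rw [gradient_inner_left, neg_neg]
    refine ⟨xk, fun y => inner ℝ (-w) y, hX, hxk, (innerSL ℝ (-w)).contDiff, ?_, ?_⟩
    · simpa only [hgrad] using tendsto_statMeasure_of_mem_polarCone_outerLimit hwlim
    · rw [hgrad]
      exact (statMeasure_pos_iff_notMem_polarCone_of_cone (hcone x) w).2 hwx

/-- Let `E` be a finite-dimensional real inner product space, `X ⊆ E`, `x ∈ X`.
Then `x` is apocalyptic — i.e. there exist a sequence `(x_k)` in `X` converging to `x` and a
continuously differentiable `f : E → ℝ` with `s(−∇f(x_k), T_{x_k}X) → 0` and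
`s(−∇f(x), T_xX) > 0` — if and only if there exists a sequence `(x_k)` in `X` converging to `x`
such that `(limsup_k T_{x_k}X)°` is not contained in `(T_xX)°`. -/
theorem stmt9 {E : Type*} [NormedAddCommGroup E] [InnerProductSpace ℝ E] [FiniteDimensional ℝ E]
    (X : Set E) (x : E) (hx : x ∈ X) :
    (∃ (xk : ℕ → E) (f : E → ℝ), (∀ k, xk k ∈ X) ∧ Tendsto xk atTop (𝓝 x) ∧
      ContDiff ℝ 1 f ∧
      Tendsto (fun k => statMeasure (-gradient f (xk k)) (bTangentCone X (xk k))) atTop (𝓝 0) ∧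
      0 < statMeasure (-gradient f x) (bTangentCone X x)) ↔
    (∃ xk : ℕ → E, (∀ k, xk k ∈ X) ∧ Tendsto xk atTop (𝓝 x) ∧
      ¬ polarCone (outerLimit fun k => bTangentCone X (xk k)) ⊆
          polarCone (bTangentCone X x)) :=
  stmt9_general X x
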